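/- arXiv:2505.16772 — 2 statements merged into one kernel-verified Lean document; each statement's English description precedes it below -/
import Mathlib

section
/- Let k₁ < k₂ be coprime positive integers and r₁, r₂, θ₁, θ₂ ∈ ℝ. The function u(x) = r₁ cos(k₁(x + θ₁)) + r₂ cos(k₂(x + θ₂)) is asymmetric (i.e., there is no a ∈ ℝ with u(2a − x) = u(x) for all x) if and only if r₁ r₂ ≠ 0 and θ₁ − θ₂ ∉ (π/(k₁k₂)) ℤ. -/
/-!
Writing `x = a - t`, the reflection defect `u(2a - x) - u(x)` equals
`-2 (r₁ sin(k₁(a + θ₁)) sin(k₁ t) + r₂ sin(k₂(a + θ₂)) sin(k₂ t))`, and `sin(k₁ t)`, `sin(k₂ t)` are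
linearly independent. So `u` is symmetric about `a` iff each nonzero term has `a` as a point where
its sine phase vanishes. Two such phase conditions `k₁(a + θ₁) ∈ πℤ`, `k₂(a + θ₂) ∈ πℤ` have a
common solution `a` iff `θ₁ - θ₂ ∈ (π / (k₁k₂))ℤ`, by Bézout for the coprime pair `k₁, k₂`.
-/

open Real

theorem cos_reflect_sub_cos (k a θ x : ℝ) :
    cos (k * ((2 * a - x) + θ)) - cos (k * (x + θ)) = -2 * sin (k * (a + θ)) * sin (k * (a - x)) := by
  rw [show k * ((2 * a - x) + θ) = k * (a + θ) + k * (a - x) by ring,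
    show k * (x + θ) = k * (a + θ) - k * (a - x) by ring, cos_add, cos_sub]
  ring

theorem eq_zero_of_forall_sin_combination_eq_zero {k₁ k₂ c₁ c₂ : ℝ} (hk₁ : 0 < k₁) (hk : k₁ < k₂)
    (h : ∀ t, c₁ * sin (k₁ * t) + c₂ * sin (k₂ * t) = 0) : c₁ = 0 ∧ c₂ = 0 := by
  have hk₂pos : 0 < k₂ := hk₁.trans hk
  have hk₂ : k₂ ≠ 0 := hk₂pos.ne'
  have hc₁ : c₁ = 0 := by
    have hpos : 0 < sin (k₁ * (π / k₂)) := by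
      apply sin_pos_of_pos_of_lt_pi (by positivity)
      calc k₁ * (π / k₂) < k₂ * (π / k₂) := by gcongr
        _ = π := mul_div_cancel₀ _ hk₂
    have h₁ := h (π / k₂)
    rw [mul_div_cancel₀ _ hk₂, sin_pi, mul_zero, add_zero] at h₁
    exact (mul_eq_zero.mp h₁).resolve_right hpos.ne'
  refine ⟨hc₁, ?_⟩
  have h₂ := h (π / (2 * k₂))
  rwa [show k₂ * (π / (2 * k₂)) = π / 2 by field_simp, sin_pi_div_two, hc₁, zero_mul, zero_add,
    mul_one] at h₂

theorem symmetric_about_iff {k₁ k₂ : ℝ} (hk₁ : 0 < k₁) (hk : k₁ < k₂) (r₁ r₂ θ₁ θ₂ a : ℝ) :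
    (∀ x : ℝ,
        r₁ * cos (k₁ * ((2 * a - x) + θ₁)) + r₂ * cos (k₂ * ((2 * a - x) + θ₂))
          = r₁ * cos (k₁ * (x + θ₁)) + r₂ * cos (k₂ * (x + θ₂)))
      ↔ r₁ * sin (k₁ * (a + θ₁)) = 0 ∧ r₂ * sin (k₂ * (a + θ₂)) = 0 := by
  have defect (x : ℝ) :
      (r₁ * cos (k₁ * ((2 * a - x) + θ₁)) + r₂ * cos (k₂ * ((2 * a - x) + θ₂)))
        - (r₁ * cos (k₁ * (x + θ₁)) + r₂ * cos (k₂ * (x + θ₂)))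
      = -2 * (r₁ * sin (k₁ * (a + θ₁)) * sin (k₁ * (a - x))
          + r₂ * sin (k₂ * (a + θ₂)) * sin (k₂ * (a - x))) := by
    linear_combination r₁ * cos_reflect_sub_cos k₁ a θ₁ x + r₂ * cos_reflect_sub_cos k₂ a θ₂ x
  constructor
  · intro h
    refine eq_zero_of_forall_sin_combination_eq_zero hk₁ hk fun t => ?_
    have := defect (a - t)
    rw [sub_sub_cancel, h (a - t), sub_self] at this
    linarith
  · rintro ⟨h₁, h₂⟩ x
    linear_combination defect x - 2 * sin (k₁ * (a - x)) * h₁ - 2 * sin (k₂ * (a - x)) * h₂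

theorem exists_sin_phases_eq_zero_iff {k₁ k₂ : ℕ} (hk₁ : 0 < k₁) (hk₂ : 0 < k₂)
    (hcop : Nat.Coprime k₁ k₂) (θ₁ θ₂ : ℝ) :
    (∃ a : ℝ, sin ((k₁ : ℝ) * (a + θ₁)) = 0 ∧ sin ((k₂ : ℝ) * (a + θ₂)) = 0)
      ↔ ∃ n : ℤ, θ₁ - θ₂ = (n : ℝ) * (π / ((k₁ : ℝ) * (k₂ : ℝ))) := by
  have hk₁R : (k₁ : ℝ) ≠ 0 := by positivity
  have hk₂R : (k₂ : ℝ) ≠ 0 := by positivity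
  constructor
  · rintro ⟨a, h₁, h₂⟩
    obtain ⟨m, hm⟩ := sin_eq_zero_iff.mp h₁
    obtain ⟨l, hl⟩ := sin_eq_zero_iff.mp h₂
    refine ⟨m * k₂ - l * k₁, ?_⟩
    field_simp
    push_cast
    linear_combination (k₂ : ℝ) * hm.symm - (k₁ : ℝ) * hl.symm
  · rintro ⟨n, hn⟩
    obtain ⟨u, v, huv⟩ := Nat.isCoprime_iff_coprime.mpr hcop
    have hnR : (n : ℝ) = (n * v : ℤ) * k₂ - (-(n * u) : ℤ) * k₁ := by
      push_cast
      linear_combination (n : ℝ) * (by exact_mod_cast huv : (u : ℝ) * k₁ + v * k₂ = 1).symm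
    refine ⟨(n * v : ℤ) * π / k₁ - θ₁, ?_, ?_⟩
    · rw [show (k₁ : ℝ) * ((n * v : ℤ) * π / k₁ - θ₁ + θ₁) = (n * v : ℤ) * π by field_simp; ring]
      exact sin_int_mul_pi _
    · rw [show (k₂ : ℝ) * ((n * v : ℤ) * π / k₁ - θ₁ + θ₂) = (-(n * u) : ℤ) * π by
        rw [show θ₂ = θ₁ - n * (π / (k₁ * k₂)) by linarith, hnR]
        field_simp
        ring]
      exact sin_int_mul_pi _

theorem stmt_10 (k₁ k₂ : ℕ) (hk₁ : 0 < k₁) (hk : k₁ < k₂)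
    (hcop : Nat.Coprime k₁ k₂) (r₁ r₂ θ₁ θ₂ : ℝ) :
    (¬ ∃ a : ℝ, ∀ x : ℝ,
        r₁ * cos ((k₁ : ℝ) * ((2 * a - x) + θ₁)) + r₂ * cos ((k₂ : ℝ) * ((2 * a - x) + θ₂))
          = r₁ * cos ((k₁ : ℝ) * (x + θ₁)) + r₂ * cos ((k₂ : ℝ) * (x + θ₂)))
      ↔ (r₁ * r₂ ≠ 0 ∧ ¬ ∃ n : ℤ, θ₁ - θ₂ = (n : ℝ) * (π / ((k₁ : ℝ) * (k₂ : ℝ)))) := by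
  have hk₁R : (0 : ℝ) < k₁ := by exact_mod_cast hk₁
  have hkR : (k₁ : ℝ) < k₂ := by exact_mod_cast hk
  simp only [symmetric_about_iff hk₁R hkR,
    ← exists_sin_phases_eq_zero_iff hk₁ (hk₁.trans hk) hcop, ← not_or, not_iff_not]
  constructor
  · rintro ⟨a, h₁, h₂⟩
    rcases mul_eq_zero.mp h₁ with hr₁ | hs₁
    · simp [hr₁]
    rcases mul_eq_zero.mp h₂ with hr₂ | hs₂
    · simp [hr₂]
    exact Or.inr ⟨a, hs₁, hs₂⟩
  · rintro (hr | ⟨a, hs₁, hs₂⟩)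
    · rcases mul_eq_zero.mp hr with hr₁ | hr₂
      · exact ⟨-θ₂, by simp [hr₁]⟩
      · exact ⟨-θ₁, by simp [hr₂]⟩
    · exact ⟨a, by simp [hs₁, hs₂]⟩
end

section
/- Let ω > 0 and g(y) = c₃ cos(ω y) + c₄ sin(ω y). If a nontrivial such g (i.e., c₃² + c₄² ≠ 0) solves a₅ ω (n−1) g^{n−1} · (−c₃ sin(ω y) + c₄ cos(ω y)) − b₄ ω g^m · (−c₃ sin(ω y) + c₄ cos(ω y)) ≡ F(y) where F is a finite trigonometric polynomial containing only frequencies ω, 2ω, 3ω, and if m ≥ 3 and n ≥ 4 with m ≠ n − 1, then a₅ = 0 and b₄ = 0. -/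
/-!
Writing `(c₃, c₄) = R (cos φ, sin φ)` turns `g` into `R cos (t - φ)` and `g'` into
`-R sin (t - φ)`. Taking the part of the identity that is odd about `t = φ`, both sides become
`sin θ` times a polynomial in `cos θ`: on the left
`-2 R ω (a₅ (n - 1) (R cos θ)^(n - 1) - b₄ (R cos θ)^m)`, on the right a polynomial of degree
at most `2`, because `sin (k θ) = sin θ · U_{k-1} (cos θ)`. As `cos θ` sweeps `(-1, 1)` where `sin θ ≠ 0`,
the two polynomials are equal, and comparing the coefficients of `X^(n-1)` and `X^m`, both of degree at least `3`,
gives `a₅ = b₄ = 0`.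
-/

open Real Polynomial

theorem Polynomial.eq_zero_of_forall_sin_mul_eval_cos_eq_zero {p : ℝ[X]}
    (h : ∀ θ, sin θ * p.eval (cos θ) = 0) : p = 0 := by
  refine p.eq_zero_of_infinite_isRoot ((Set.Ioo_infinite (show (-1 : ℝ) < 1 by norm_num)).mono ?_)
  rintro x ⟨hx₁, hx₂⟩
  have hsin : sin (arccos x) ≠ 0 := by
    rw [sin_arccos]
    exact (sqrt_pos.2 (by nlinarith)).ne'
  simpa [IsRoot, cos_arccos hx₁.le hx₂.le, hsin] using h (arccos x)

theorem Polynomial.eq_zero_of_C_mul_X_pow_add_C_mul_X_pow_eq {R : Type*} [Semiring R]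
    {a b : R} {i j d : ℕ} {q : R[X]} (hij : i ≠ j) (hi : d < i) (hj : d < j)
    (hq : q.natDegree ≤ d) (h : C a * X ^ i + C b * X ^ j = q) : a = 0 ∧ b = 0 := by
  have hcoeff (k : ℕ) (hk : d < k) : q.coeff k = 0 := coeff_eq_zero_of_natDegree_lt (by omega)
  constructor
  · simpa [← h, coeff_C_mul_X_pow, hij] using hcoeff i hi
  · simpa [← h, coeff_C_mul_X_pow, hij.symm] using hcoeff j hj

theorem exists_pos_eq_mul_cos_eq_mul_sin {a b : ℝ} (h : a ^ 2 + b ^ 2 ≠ 0) :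
    ∃ R φ, 0 < R ∧ a = R * cos φ ∧ b = R * sin φ := by
  have hz : (⟨a, b⟩ : ℂ) ≠ 0 := by
    rintro ⟨⟩
    simp at h
  exact ⟨_, _, norm_pos_iff.2 hz, (Complex.norm_mul_cos_arg ⟨a, b⟩).symm,
    (Complex.norm_mul_sin_arg ⟨a, b⟩).symm⟩

theorem exists_natDegree_le_harmonic_sub_eq_sin_mul_eval_cos (k : ℕ) (a b φ : ℝ) :
    ∃ q : ℝ[X], q.natDegree ≤ k - 1 ∧ ∀ θ,
      (a * cos (k * (φ + θ)) + b * sin (k * (φ + θ)))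
        - (a * cos (k * (φ - θ)) + b * sin (k * (φ - θ))) = sin θ * q.eval (cos θ) := by
  refine ⟨C (2 * (b * cos (k * φ) - a * sin (k * φ))) * Chebyshev.U ℝ ((k : ℤ) - 1), ?_, ?_⟩
  · refine natDegree_C_mul_le _ _ |>.trans ?_
    rw [Chebyshev.natDegree_U]
    omega
  · intro θ
    have hU := Chebyshev.U_real_cos θ ((k : ℤ) - 1)
    push_cast at hU
    simp only [sub_add_cancel] at hU
    simp only [eval_mul, eval_C, mul_add, mul_sub, cos_add, sin_add, cos_sub, sin_sub]
    linear_combination (-2 * (b * cos (k * φ) - a * sin (k * φ))) * hU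

theorem sub_comp_mul_deriv_eq_of_polar {a b R φ : ℝ} (ha : a = R * cos φ) (hb : b = R * sin φ)
    (f : ℝ → ℝ) (θ : ℝ) :
    f (a * cos (φ + θ) + b * sin (φ + θ)) * (-a * sin (φ + θ) + b * cos (φ + θ))
      - f (a * cos (φ - θ) + b * sin (φ - θ)) * (-a * sin (φ - θ) + b * cos (φ - θ))
      = -2 * R * sin θ * f (R * cos θ) := by
  have hg (t : ℝ) : a * cos t + b * sin t = R * cos (t - φ) := by
    rw [ha, hb, cos_sub]; ring
  have hg' (t : ℝ) : -a * sin t + b * cos t = -(R * sin (t - φ)) := by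
    rw [ha, hb, sin_sub]; ring
  simp only [hg, hg', add_sub_cancel_left, sub_sub_cancel_left, cos_neg, sin_neg]
  ring

theorem stmt_18 (ω c₃ c₄ a₅ b₄ : ℝ) (hω : 0 < ω) (hnt : c₃ ^ 2 + c₄ ^ 2 ≠ 0)
    (m n : ℕ) (hm : 3 ≤ m) (hn : 4 ≤ n) (hmn : m ≠ n - 1)
    (A B : Fin 4 → ℝ)
    (heq : ∀ y : ℝ,
      a₅ * ω * ((n : ℝ) - 1)
          * (c₃ * cos (ω * y) + c₄ * sin (ω * y)) ^ (n - 1)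
          * (-c₃ * sin (ω * y) + c₄ * cos (ω * y))
        - b₄ * ω * (c₃ * cos (ω * y) + c₄ * sin (ω * y)) ^ m
          * (-c₃ * sin (ω * y) + c₄ * cos (ω * y))
        = (A 1 * cos (ω * y) + B 1 * sin (ω * y))
          + (A 2 * cos (2 * ω * y) + B 2 * sin (2 * ω * y))
          + (A 3 * cos (3 * ω * y) + B 3 * sin (3 * ω * y))) :
    a₅ = 0 ∧ b₄ = 0 := by
  obtain ⟨R, φ, hR, hc₃, hc₄⟩ := exists_pos_eq_mul_cos_eq_mul_sin hnt
  obtain ⟨q₁, hq₁, h₁⟩ := exists_natDegree_le_harmonic_sub_eq_sin_mul_eval_cos 1 (A 1) (B 1) φ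
  obtain ⟨q₂, hq₂, h₂⟩ := exists_natDegree_le_harmonic_sub_eq_sin_mul_eval_cos 2 (A 2) (B 2) φ
  obtain ⟨q₃, hq₃, h₃⟩ := exists_natDegree_le_harmonic_sub_eq_sin_mul_eval_cos 3 (A 3) (B 3) φ
  simp only [Nat.cast_one, one_mul, Nat.cast_ofNat] at h₁ h₂ h₃
  have heq' (t : ℝ) := heq (t / ω)
  simp only [mul_assoc, mul_div_cancel₀ _ hω.ne'] at heq'
  have hP : C (-2 * R * (a₅ * ω * ((n : ℝ) - 1) * R ^ (n - 1))) * X ^ (n - 1)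
      + C (2 * R * (b₄ * ω * R ^ m)) * X ^ m - (q₁ + q₂ + q₃) = 0 := by
    refine eq_zero_of_forall_sin_mul_eval_cos_eq_zero fun θ => ?_
    have hodd := sub_comp_mul_deriv_eq_of_polar hc₃ hc₄
      (fun x => a₅ * ω * ((n : ℝ) - 1) * x ^ (n - 1) - b₄ * ω * x ^ m) θ
    simp only [eval_sub, eval_add, eval_mul, eval_C, eval_pow, eval_X]
    linear_combination heq' (φ + θ) - heq' (φ - θ) - hodd + h₁ θ + h₂ θ + h₃ θ
  obtain ⟨ha, hb⟩ := eq_zero_of_C_mul_X_pow_add_C_mul_X_pow_eq (d := 2) (by omega) (by omega)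
    (by omega) (natDegree_add_le_of_degree_le (natDegree_add_le_of_degree_le
      (hq₁.trans (by omega)) (hq₂.trans (by omega))) (hq₃.trans (by omega))) (sub_eq_zero.1 hP)
  have hn₁ : (n : ℝ) - 1 ≠ 0 := by
    have : (4 : ℝ) ≤ n := by exact_mod_cast hn
    linarith
  exact ⟨by simpa [hR.ne', hω.ne', hn₁] using ha, by simpa [hR.ne', hω.ne'] using hb⟩
end
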